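/- arXiv:2512.10792 — 2 statements merged into one kernel-verified Lean document; each statement's English description precedes it below -/
import Mathlib

section
/- A priori flow bound: assume R i > 0 for all i : Fin m, the graph is connected, and B ⊆ Fin n is nonempty. If P : Fin n → ℝ satisfies (L P) j = 0 for all j ∉ B with L = Cᵀ · diag(fun i => 1 / R i) · C, and the edge flows are given by Poiseuille's law Q i = (P (s i) − P (t i)) / R i, then for every edge i, |Q i| ≤ (max over j ∈ B of P j − min over j ∈ B of P j) / R i. -/
/-!
Maximum principle: if `P` is harmonic for the weighted graph Laplacian off `B`, then at an interior
global maximiser the Laplacian is a sum of nonnegative terms `w i * (P j - P k)` over the edges at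
`j`, so all of them vanish and every neighbour is again a maximiser. Connectedness carries the
maximum to `B`; applied to `-P` this gives the minimum principle, and every pressure drop
`P (s i) - P (t i)` is therefore bounded by the spread of `P` on `B`.
-/

open Matrix

/-- Oriented incidence matrix of a finite oriented graph given by source and
target maps `s t : Fin m → Fin n`. -/
def incidenceMatrix (n m : ℕ) (s t : Fin m → Fin n) : Matrix (Fin m) (Fin n) ℝ :=
  fun i j => if j = t i then 1 else if j = s i then -1 else 0

/-- Two vertices are adjacent if some edge has them as its endpoints
(ignoring orientation). -/
def Adj (n m : ℕ) (s t : Fin m → Fin n) (a b : Fin n) : Prop :=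
  ∃ i : Fin m, (s i = a ∧ t i = b) ∨ (s i = b ∧ t i = a)

/-- The graph is connected if any two vertices are joined by a finite chain of
adjacent vertices. -/
def GraphConnected (n m : ℕ) (s t : Fin m → Fin n) : Prop :=
  ∀ a b : Fin n, Relation.ReflTransGen (Adj n m s t) a b

def laplacian (n m : ℕ) (s t : Fin m → Fin n) (w : Fin m → ℝ) : Matrix (Fin n) (Fin n) ℝ :=
  (incidenceMatrix n m s t)ᵀ * diagonal w * incidenceMatrix n m s t

theorem Relation.ReflTransGen.exists_mem_of_closed {α : Type*} {r : α → α → Prop}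
    {S B : Set α} (hS : ∀ x y, r x y → x ∈ S → x ∉ B → y ∈ S) {a c : α}
    (h : Relation.ReflTransGen r a c) (ha : a ∈ S) (hc : c ∈ B) : ∃ x ∈ B, x ∈ S := by
  induction h using Relation.ReflTransGen.head_induction_on with
  | refl => exact ⟨c, hc, ha⟩
  | @head a b hab _ ih =>
    by_cases haB : a ∈ B
    · exact ⟨a, haB, ha⟩
    · exact ih (hS a b hab ha haB)

section IncidenceMatrix

variable {n m : ℕ} {s t : Fin m → Fin n}

theorem incidenceMatrix_mulVec_apply (P : Fin n → ℝ) {i : Fin m} (hi : s i ≠ t i) :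
    (incidenceMatrix n m s t *ᵥ P) i = P (t i) - P (s i) := by
  rw [mulVec, dotProduct, Fintype.sum_eq_add (t i) (s i) hi.symm fun k hk => by
    simp [incidenceMatrix, hk.1, hk.2]]
  simp [incidenceMatrix, hi]
  ring

theorem incidenceMatrix_apply_mul_sub (P : Fin n → ℝ) (i : Fin m) (j : Fin n) :
    incidenceMatrix n m s t i j * (P (t i) - P (s i)) =
      if j = t i then P j - P (s i) else if j = s i then P j - P (t i) else 0 := by
  unfold incidenceMatrix
  split_ifs <;> subst_vars <;> ring

theorem laplacian_mulVec_apply (hst : ∀ i, s i ≠ t i) (w : Fin m → ℝ) (P : Fin n → ℝ)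
    (j : Fin n) :
    (laplacian n m s t w *ᵥ P) j =
      ∑ i, w i * (incidenceMatrix n m s t i j * (P (t i) - P (s i))) := by
  rw [laplacian, ← mulVec_mulVec, ← mulVec_mulVec]
  change ∑ i, _ * (diagonal w *ᵥ _) i = _
  simp only [mulVec_diagonal, transpose_apply, incidenceMatrix_mulVec_apply P (hst _)]
  exact Finset.sum_congr rfl fun i _ => by ring

theorem eq_of_adj_of_laplacian_mulVec_eq_zero (hst : ∀ i, s i ≠ t i) {w : Fin m → ℝ}
    (hw : ∀ i, 0 < w i) {P : Fin n → ℝ} {j : Fin n} (hj : (laplacian n m s t w *ᵥ P) j = 0)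
    (hmax : ∀ v, P v ≤ P j) {k : Fin n} (hjk : Adj n m s t j k) : P k = P j := by
  have hterm := fun i => incidenceMatrix_apply_mul_sub (s := s) (t := t) P i j
  have hnonneg : ∀ i ∈ Finset.univ,
      0 ≤ w i * (incidenceMatrix n m s t i j * (P (t i) - P (s i))) := fun i _ => by
    rw [hterm]
    split_ifs <;> exact mul_nonneg (hw i).le (by linarith [hmax (s i), hmax (t i)])
  rw [laplacian_mulVec_apply hst] at hj
  obtain ⟨i, hi⟩ := hjk
  have hzero := (Finset.sum_eq_zero_iff_of_nonneg hnonneg).mp hj i (Finset.mem_univ i)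
  rw [hterm] at hzero
  rcases hi with ⟨rfl, rfl⟩ | ⟨rfl, rfl⟩
  · simp only [hst i, if_false, if_true, mul_eq_zero, (hw i).ne', false_or] at hzero
    linarith
  · simp only [if_true, mul_eq_zero, (hw i).ne', false_or] at hzero
    linarith

theorem le_sup'_of_laplacian_mulVec_eq_zero (hst : ∀ i, s i ≠ t i) {w : Fin m → ℝ}
    (hw : ∀ i, 0 < w i) (hconn : GraphConnected n m s t) {B : Finset (Fin n)}
    (hB : B.Nonempty) {P : Fin n → ℝ} (hP : ∀ j ∉ B, (laplacian n m s t w *ᵥ P) j = 0)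
    (v : Fin n) : P v ≤ B.sup' hB P := by
  have : Nonempty (Fin n) := ⟨hB.choose⟩
  obtain ⟨a, ha⟩ := Finite.exists_max P
  obtain ⟨b, hb⟩ := hB
  obtain ⟨x, hxB, hx⟩ := (hconn a b).exists_mem_of_closed
    (S := {x | ∀ v, P v ≤ P x}) (B := ↑B)
    (fun x y hxy hxS hxB v => by
      rw [eq_of_adj_of_laplacian_mulVec_eq_zero hst hw (hP x hxB) hxS hxy]
      exact hxS v)
    ha hb
  exact (hx v).trans (Finset.le_sup' P hxB)

theorem inf'_le_of_laplacian_mulVec_eq_zero (hst : ∀ i, s i ≠ t i) {w : Fin m → ℝ}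
    (hw : ∀ i, 0 < w i) (hconn : GraphConnected n m s t) {B : Finset (Fin n)}
    (hB : B.Nonempty) {P : Fin n → ℝ} (hP : ∀ j ∉ B, (laplacian n m s t w *ᵥ P) j = 0)
    (v : Fin n) : B.inf' hB P ≤ P v := by
  have hneg := le_sup'_of_laplacian_mulVec_eq_zero hst hw hconn hB (P := -P)
    (fun j hj => by rw [mulVec_neg, Pi.neg_apply, hP j hj, neg_zero]) v
  have hsup : B.sup' hB (-P) ≤ -B.inf' hB P :=
    Finset.sup'_le hB _ fun b hb => neg_le_neg (Finset.inf'_le P hb)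
  have hv := hneg.trans hsup
  rw [Pi.neg_apply] at hv
  linarith

end IncidenceMatrix

/-- A priori bound on the Poiseuille edge flows in terms of the spread of the
boundary pressures. -/
theorem flow_apriori_bound (n m : ℕ) (s t : Fin m → Fin n)
    (hst : ∀ i, s i ≠ t i) (R : Fin m → ℝ) (hR : ∀ i, 0 < R i)
    (hconn : GraphConnected n m s t) (B : Finset (Fin n)) (hB : B.Nonempty)
    (P : Fin n → ℝ)
    (hP : ∀ j ∉ B, ((incidenceMatrix n m s t)ᵀ *
        Matrix.diagonal (fun i => 1 / R i) *
        incidenceMatrix n m s t).mulVec P j = 0)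
    (Q : Fin m → ℝ) (hQ : ∀ i, Q i = (P (s i) - P (t i)) / R i) :
    ∀ i : Fin m, |Q i| ≤ (B.sup' hB P - B.inf' hB P) / R i := by
  have hw : ∀ i, 0 < 1 / R i := fun i => one_div_pos.mpr (hR i)
  have hmax := le_sup'_of_laplacian_mulVec_eq_zero hst hw hconn hB hP
  have hmin := inf'_le_of_laplacian_mulVec_eq_zero hst hw hconn hB hP
  intro i
  rw [hQ i, abs_div, abs_of_pos (hR i)]
  refine div_le_div_of_nonneg_right (abs_sub_le_iff.mpr ⟨?_, ?_⟩) (hR i).le <;>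
    linarith [hmax (s i), hmax (t i), hmin (s i), hmin (t i)]
end

section
/- Unique solvability of the graph convection (plasma skimming) system: assume s i < t i (as elements of Fin n) for every edge i : Fin m, Q i > 0 for all i, and let O ⊆ Fin n be the outlet set such that every vertex k ∉ O has at least one outgoing edge (∃ i, s i = k) and every vertex k ∈ O has at least one incoming edge (∃ i, t i = k). Define N = Cᵀ · diag(Q) · ⟦−C⟧ − diag(d), where d k = ∑ over i of C i k * Q i if k ∈ O and d k = 0 otherwise. Then N is lower triangular with strictly negative diagonal entries, N is invertible, and for every b : Fin n → ℝ the system N · H* = b has a unique solution H* : Fin n → ℝ. -/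
/-!
The matrix `⟦−C⟧` selects the source of each edge, so `N j k` collects the edges leaving `k`,
weighted by `C i j * Q i`; such an edge only touches `j ∈ {k, t i}` with `t i > k`, whence `N` is
lower triangular. On the diagonal, `N k k` is minus the outflow at `k` when `k ∉ O`, while for an
outlet the correction `d k = inflow − outflow` turns it into minus the inflow. Both are negative by
the outlet conditions, and a triangular matrix with nonzero diagonal is invertible.
-/

open Matrix

/-- Entrywise positive-part operator `⟦X⟧ i j = max (X i j) 0`. -/
def posPart {α β : Type*} (X : Matrix α β ℝ) : Matrix α β ℝ :=
  fun i j => max (X i j) 0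

theorem Matrix.IsLowerTriangular.isUnit {ι R : Type*} [Fintype ι] [LinearOrder ι] [CommRing R]
    {M : Matrix ι ι R} (hM : M.IsLowerTriangular) (hdiag : ∀ i, IsUnit (M i i)) : IsUnit M := by
  rw [isUnit_iff_isUnit_det, det_of_isLowerTriangular M hM]
  exact IsUnit.prod_univ_iff.2 hdiag

theorem Matrix.existsUnique_mulVec_eq {ι K : Type*} [Fintype ι] [DecidableEq ι] [Field K]
    {M : Matrix ι ι K} (hM : IsUnit M) (b : ι → K) : ∃! x, M *ᵥ x = b :=
  (Function.Bijective.existsUnique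
    ⟨mulVec_injective_iff_isUnit.2 hM, mulVec_surjective_iff_isUnit.2 hM⟩) b

theorem Finset.sum_filter_pos {ι M : Type*} [Fintype ι] [AddCommMonoid M] [PartialOrder M]
    [IsOrderedCancelAddMonoid M] {p : ι → Prop} [DecidablePred p] {f : ι → M} (hf : ∀ i, 0 < f i) (hp : ∃ i, p i) : 0 < ∑ i with p i, f i := by
  obtain ⟨i, hi⟩ := hp
  exact Finset.sum_pos (fun j _ => hf j) ⟨i, Finset.mem_filter.2 ⟨Finset.mem_univ i, hi⟩⟩

section Incidence

variable {n m : ℕ} {s t : Fin m → Fin n}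

theorem incidenceMatrix_apply {i : Fin m} (hi : s i ≠ t i) (k : Fin n) :
    incidenceMatrix n m s t i k = (if k = t i then 1 else 0) - if k = s i then 1 else 0 := by
  unfold incidenceMatrix
  by_cases hkt : k = t i
  · simp [hkt, hi.symm]
  · by_cases hks : k = s i <;> simp [hkt, hks, hi]

theorem posPart_neg_incidenceMatrix_apply {i : Fin m} (hi : s i ≠ t i) (k : Fin n) :
    _root_.posPart (-incidenceMatrix n m s t) i k = if k = s i then 1 else 0 := by
  simp only [_root_.posPart, Matrix.neg_apply, incidenceMatrix_apply hi]
  by_cases hkt : k = t i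
  · simp [hkt, hi.symm]
  · by_cases hks : k = s i <;> simp [hkt, hks, hi]

theorem sum_incidenceMatrix_mul (hst : ∀ i, s i ≠ t i) (Q : Fin m → ℝ) (k : Fin n) :
    ∑ i, incidenceMatrix n m s t i k * Q i =
      (∑ i with t i = k, Q i) - ∑ i with s i = k, Q i := by
  simp only [incidenceMatrix_apply (hst _), sub_mul, ite_mul, one_mul, zero_mul,
    Finset.sum_sub_distrib, Finset.sum_ite, Finset.sum_const_zero, add_zero, eq_comm]

/-- `Cᵀ diag(Q) ⟦−C⟧`: edge `i` transports the value at its source `s i`. -/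
def upwindMatrix (s t : Fin m → Fin n) (Q : Fin m → ℝ) : Matrix (Fin n) (Fin n) ℝ :=
  (incidenceMatrix n m s t)ᵀ * diagonal Q * _root_.posPart (-incidenceMatrix n m s t)

theorem upwindMatrix_apply (hst : ∀ i, s i ≠ t i) (Q : Fin m → ℝ) (j k : Fin n) :
    upwindMatrix s t Q j k = ∑ i with s i = k, incidenceMatrix n m s t i j * Q i := by
  rw [upwindMatrix, mul_apply]
  simp only [mul_diagonal, transpose_apply, posPart_neg_incidenceMatrix_apply (hst _),
    mul_ite, mul_one, mul_zero, Finset.sum_ite, Finset.sum_const_zero, add_zero, eq_comm]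

theorem upwindMatrix_isLowerTriangular (hst : ∀ i, s i < t i) (Q : Fin m → ℝ) :
    (upwindMatrix s t Q).IsLowerTriangular := by
  intro j k hkj
  have hjk : j < k := hkj
  rw [upwindMatrix_apply (fun i => (hst i).ne)]
  refine Finset.sum_eq_zero fun i hi => ?_
  have hsi : s i = k := (Finset.mem_filter.1 hi).2
  have hjs : j ≠ s i := hsi ▸ hjk.ne
  have hjt : j ≠ t i := (hjk.trans_le (hsi ▸ (hst i).le)).ne
  simp [incidenceMatrix_apply (hst i).ne, hjs, hjt]

theorem upwindMatrix_apply_self (hst : ∀ i, s i ≠ t i) (Q : Fin m → ℝ) (k : Fin n) :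
    upwindMatrix s t Q k k = -∑ i with s i = k, Q i := by
  rw [upwindMatrix_apply hst, ← Finset.sum_neg_distrib]
  refine Finset.sum_congr rfl fun i hi => ?_
  have hsi : s i = k := (Finset.mem_filter.1 hi).2
  simp [incidenceMatrix_apply (hst i), ← hsi, hst i]

end Incidence

/-- Unique solvability of the graph convection (plasma skimming) system:
under topological ordering, positive pseudo-fluxes and the stated outlet
conditions, the convection matrix `N` is lower triangular with strictly
negative diagonal, invertible, and the system `N ⬝ H* = b` is uniquely
solvable for every right-hand side. -/
theorem convection_system_unique_solvability (n m : ℕ) (s t : Fin m → Fin n)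
    (hst : ∀ i : Fin m, s i < t i) (Q : Fin m → ℝ) (hQ : ∀ i, 0 < Q i)
    (O : Finset (Fin n))
    (hout : ∀ k : Fin n, k ∉ O → ∃ i : Fin m, s i = k)
    (hin : ∀ k ∈ O, ∃ i : Fin m, t i = k) :
    let C := incidenceMatrix n m s t
    let d : Fin n → ℝ := fun k =>
      if k ∈ O then ∑ i : Fin m, C i k * Q i else 0
    let N := Cᵀ * Matrix.diagonal Q * posPart (-C) - Matrix.diagonal d
    (∀ j k : Fin n, j < k → N j k = 0) ∧
    (∀ k : Fin n, N k k < 0) ∧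
    IsUnit N ∧
    (∀ b : Fin n → ℝ, ∃! Hstar : Fin n → ℝ, N.mulVec Hstar = b) := by
  intro C d N
  have hne : ∀ i, s i ≠ t i := fun i => (hst i).ne
  have hlower : N.IsLowerTriangular :=
    (upwindMatrix_isLowerTriangular hst Q).sub (blockTriangular_diagonal d)
  have hdiag : ∀ k, N k k < 0 := by
    intro k
    change (upwindMatrix s t Q - diagonal d) k k < 0
    simp only [d, C, Matrix.sub_apply, diagonal_apply_eq, upwindMatrix_apply_self hne]
    split_ifs with hk
    · rw [sum_incidenceMatrix_mul hne]
      linarith [Finset.sum_filter_pos hQ (hin k hk)]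
    · linarith [Finset.sum_filter_pos hQ (hout k hk)]
  have hunit : IsUnit N := hlower.isUnit fun k => (hdiag k).ne.isUnit
  exact ⟨fun j k hjk => hlower hjk, hdiag, hunit, existsUnique_mulVec_eq hunit⟩
end
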